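/- For B > 0 and any u, v in R, the classical convolution of the two shifted sinc functions satisfies: (sinc((B/π)(·−v)) ⋆ sinc((B/π)(·−u)))(x) = (π/B) sinc((B/π)(x−(v+u))) for all x in R. -/

import Mathlib

open MeasureTheory Real

open scoped ComplexConjugate

/-- The normalized sinc function: `sinc x = sin (π x) / (π x)`, with `sinc 0 = 1`. -/
noncomputable def sinc (x : ℝ) : ℝ :=
  if x = 0 then 1 else Real.sin (Real.pi * x) / (Real.pi * x)



lemma sinc_zero : _root_.sinc 0 = 1 := if_pos rfl

lemma sinc_neg (x : ℝ) : _root_.sinc (-x) = _root_.sinc x := by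
  unfold _root_.sinc
  rcases eq_or_ne x 0 with h | h
  · simp [h]
  · rw [if_neg (neg_ne_zero.mpr h), if_neg h, mul_neg, Real.sin_neg, neg_div_neg_eq]

lemma measurable_sinc : Measurable _root_.sinc := by
  unfold _root_.sinc
  exact Measurable.ite (measurableSet_singleton 0) measurable_const
    ((Real.measurable_sin.comp (measurable_const.mul measurable_id)).div
      (measurable_const.mul measurable_id))

lemma abs_sinc_le_one (x : ℝ) : |_root_.sinc x| ≤ 1 := by
  unfold _root_.sinc
  rcases eq_or_ne x 0 with h | h
  · simp [h]
  · rw [if_neg h, abs_div]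
    rw [div_le_one (by positivity : (0:ℝ) < |Real.pi * x|)]
    exact Real.abs_sin_le_abs

lemma abs_sinc_le_inv (x : ℝ) (hx : x ≠ 0) : |_root_.sinc x| ≤ 1 / (Real.pi * |x|) := by
  unfold _root_.sinc
  rw [if_neg hx, abs_div, abs_mul, abs_of_pos Real.pi_pos]
  gcongr
  exact Real.abs_sin_le_one _

-- complex integral of exponential over [-1/2, 1/2]
lemma integral_exp_eq_sinc (c : ℝ) :
    (∫ x in (-(1/2) : ℝ)..(1/2), Complex.exp (2 * Real.pi * c * x * Complex.I)) = (_root_.sinc c : ℂ) := by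
  rcases eq_or_ne c 0 with h | h
  · simp [h, _root_.sinc_zero]
    norm_num
  · have hc : (2 * Real.pi * c * Complex.I : ℂ) ≠ 0 := by
      simp [Complex.ext_iff, Real.pi_ne_zero, h]
    have := integral_exp_mul_complex (a := (-(1/2):ℝ)) (b := (1/2:ℝ)) hc
    have heq : ∀ x : ℝ, (2 * Real.pi * c * Complex.I) * (x : ℂ)
        = 2 * Real.pi * c * x * Complex.I := by intro x; ring
    simp_rw [heq] at this
    rw [this]
    have h1 : (2 * (Real.pi:ℂ) * c * ((1:ℝ)/2 : ℝ) * Complex.I) = (Real.pi * c) * Complex.I := by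
      push_cast; ring
    have h2 : (2 * (Real.pi:ℂ) * c * ((-(1:ℝ)/2) : ℝ) * Complex.I) = -((Real.pi * c) * Complex.I) := by
      push_cast; ring
    rw [show ((-(1/2) : ℝ) : ℂ) = ((-(1:ℝ)/2 : ℝ) : ℂ) by norm_num, h1, h2]
    have hsin : Complex.exp ((Real.pi * c) * Complex.I) - Complex.exp (-((Real.pi * c) * Complex.I))
        = 2 * Complex.I * Complex.sin (Real.pi * c) := by
      rw [Complex.sin]
      ring_nf
      rw [Complex.I_sq]
      ring
    rw [hsin]
    unfold _root_.sinc
    rw [if_neg h]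
    have hπc : ((Real.pi * c : ℝ) : ℂ) ≠ 0 := by
      simpa [Complex.ext_iff] using mul_ne_zero Real.pi_ne_zero h
    rw [show ((Real.pi:ℂ) * c) = ((Real.pi * c : ℝ) : ℂ) by push_cast; ring,
      ← Complex.ofReal_sin, Complex.ofReal_div]
    rw [div_eq_div_iff (by simpa [Complex.ext_iff, Real.pi_ne_zero, h] using hc) hπc]
    push_cast
    ring


instance : Fact ((0:ℝ) < 1) := ⟨one_pos⟩

noncomputable def eFun (a : ℝ) : ℝ → ℂ := fun s => Complex.exp (2 * Real.pi * a * s * Complex.I)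

lemma norm_eFun (a s : ℝ) : ‖eFun a s‖ = 1 := by
  rw [eFun, show (2*(Real.pi:ℂ)*a*s*Complex.I) = ((2*Real.pi*a*s : ℝ):ℂ) * Complex.I by
    push_cast; ring]
  rw [Complex.norm_exp]
  simp

lemma measurable_eFun (a : ℝ) : Measurable (eFun a) := by
  apply Complex.measurable_exp.comp
  fun_prop

noncomputable def eCirc (a : ℝ) : AddCircle (1:ℝ) → ℂ := AddCircle.liftIoc 1 (-(1/2)) (eFun a)

lemma measurable_eCirc (a : ℝ) : Measurable (eCirc a) := by
  have : eCirc a = ((eFun a) ∘ Subtype.val) ∘ (AddCircle.measurableEquivIoc 1 (-(1/2))) := rfl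
  rw [this]
  exact (((measurable_eFun a).comp measurable_subtype_coe)).comp
    (AddCircle.measurableEquivIoc 1 (-(1/2))).measurable

lemma memLp_eCirc (a : ℝ) : MemLp (eCirc a) 2 AddCircle.haarAddCircle := by
  refine MemLp.of_bound (measurable_eCirc a).aestronglyMeasurable 1 ?_
  filter_upwards with z
  exact (norm_eFun a _).le

noncomputable def eLp (a : ℝ) : Lp ℂ 2 (@AddCircle.haarAddCircle 1 _) := (memLp_eCirc a).toLp _

lemma fourierCoeff_eCirc (a : ℝ) (n : ℤ) :
    fourierCoeff (eCirc a) n = (_root_.sinc (a - n) : ℂ) := by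
  rw [fourierCoeff_eq_intervalIntegral _ n (-(1/2))]
  rw [← integral_exp_eq_sinc (a - n)]
  rw [show ((-(1/2) : ℝ) + 1) = 1/2 by norm_num]
  rw [one_div_one, one_smul]
  rw [intervalIntegral.integral_of_le (by norm_num : (-(1/2):ℝ) ≤ 1/2),
    intervalIntegral.integral_of_le (by norm_num : (-(1/2):ℝ) ≤ 1/2)]
  refine setIntegral_congr_fun measurableSet_Ioc (fun x hx => ?_)
  have hx' : x ∈ Set.Ioc (-(1/2) : ℝ) (-(1/2) + 1) := by
    rw [show ((-(1/2) : ℝ) + 1) = 1/2 by norm_num]; exact hx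
  rw [eCirc, AddCircle.liftIoc_coe_apply hx']
  rw [fourier_coe_apply, smul_eq_mul, eFun, ← Complex.exp_add]
  congr 1
  push_cast
  ring

lemma volume_eq_haar : (volume : Measure (AddCircle (1:ℝ))) = AddCircle.haarAddCircle := by
  rw [AddCircle.volume_eq_smul_haarAddCircle]
  simp

lemma inner_eLp (a b : ℝ) : (inner ℂ (eLp a) (eLp b) : ℂ) = (_root_.sinc (b - a) : ℂ) := by
  rw [MeasureTheory.L2.inner_def]
  have h1 : ∫ z, inner ℂ ((eLp a : AddCircle (1:ℝ) → ℂ) z) ((eLp b : AddCircle (1:ℝ) → ℂ) z)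
      ∂AddCircle.haarAddCircle
      = ∫ z, conj (eCirc a z) * eCirc b z ∂AddCircle.haarAddCircle := by
    refine integral_congr_ae ?_
    filter_upwards [MemLp.coeFn_toLp (memLp_eCirc a), MemLp.coeFn_toLp (memLp_eCirc b)]
      with z ha hb
    rw [RCLike.inner_apply']
    rw [show (eLp a : AddCircle (1:ℝ) → ℂ) z = eCirc a z from ha,
      show (eLp b : AddCircle (1:ℝ) → ℂ) z = eCirc b z from hb]
  rw [h1, ← volume_eq_haar, ← AddCircle.integral_preimage 1 (-(1/2))
      (fun z => conj (eCirc a z) * eCirc b z)]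
  rw [← integral_exp_eq_sinc (b - a),
    intervalIntegral.integral_of_le (by norm_num : (-(1/2):ℝ) ≤ 1/2)]
  rw [show ((-(1/2) : ℝ) + 1) = 1/2 by norm_num]
  refine setIntegral_congr_fun measurableSet_Ioc (fun x hx => ?_)
  have hx' : x ∈ Set.Ioc (-(1/2) : ℝ) (-(1/2) + 1) := by
    rw [show ((-(1/2) : ℝ) + 1) = 1/2 by norm_num]; exact hx
  rw [eCirc, eCirc, AddCircle.liftIoc_coe_apply hx', AddCircle.liftIoc_coe_apply hx']
  rw [eFun, eFun, ← Complex.exp_conj, ← Complex.exp_add]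
  congr 1
  have : conj (2 * (Real.pi:ℂ) * a * x * Complex.I) = -(2 * Real.pi * a * x * Complex.I) := by
    simp only [map_mul, Complex.conj_I, Complex.conj_ofReal, map_ofNat]
    push_cast
    ring
  rw [this]
  push_cast
  ring

lemma fourierCoeff_eLp (a : ℝ) (n : ℤ) :
    fourierCoeff ((eLp a : AddCircle (1:ℝ) → ℂ)) n = (_root_.sinc (a - n) : ℂ) := by
  rw [← fourierCoeff_eCirc a n]
  refine integral_congr_ae ?_
  filter_upwards [MemLp.coeFn_toLp (memLp_eCirc a)] with z hz
  rw [show ((eLp a : AddCircle (1:ℝ) → ℂ)) z = eCirc a z from hz]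

lemma hasSum_sinc_mul (a b : ℝ) :
    HasSum (fun n : ℤ => _root_.sinc (a - n) * _root_.sinc (b - n)) (_root_.sinc (b - a)) := by
  have hsum := HilbertBasis.summable_inner_mul_inner fourierBasis (eLp a) (eLp b)
  have htsum := HilbertBasis.tsum_inner_mul_inner fourierBasis (eLp a) (eLp b)
  have hterm : ∀ n : ℤ, (inner ℂ (eLp a) (fourierBasis n) : ℂ) * inner ℂ (fourierBasis n) (eLp b)
      = ((_root_.sinc (a - n) * _root_.sinc (b - n) : ℝ) : ℂ) := by
    intro n
    rw [← inner_conj_symm, ← HilbertBasis.repr_apply_apply, ← HilbertBasis.repr_apply_apply,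
      fourierBasis_repr, fourierBasis_repr, fourierCoeff_eLp, fourierCoeff_eLp,
      Complex.conj_ofReal]
    push_cast
    ring
  have hC : HasSum (fun n : ℤ => ((_root_.sinc (a - n) * _root_.sinc (b - n) : ℝ) : ℂ)) ((_root_.sinc (b - a) : ℂ)) := by
    have := hsum.hasSum
    rw [htsum, inner_eLp] at this
    simp_rw [hterm] at this
    exact this
  have := Complex.reCLM.hasSum hC
  simpa using this

lemma integral_eq_of_hasSum_translates {f : ℝ → ℝ} (hint : Integrable f) {S : ℝ}
    (hpt : ∀ t : ℝ, HasSum (fun n : ℤ => f (t + n)) S) : ∫ t, f t = S := by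
  have h1 := hint.hasSum_intervalIntegral_comp_add_int
  have h2 := hint.norm.hasSum_intervalIntegral_comp_add_int
  -- convert interval integrals to set integrals over Ioc 0 1
  have hioc : ∀ (g : ℝ → ℝ) (n : ℤ), (∫ x in (0:ℝ)..(1:ℝ), g (x + n))
      = ∫ x in Set.Ioc (0:ℝ) 1, g (x + n) :=
    fun g n => intervalIntegral.integral_of_le zero_le_one
  have hswap : (∫ t in Set.Ioc (0:ℝ) 1, ∑' n : ℤ, f (t + n))
      = ∑' n : ℤ, ∫ t in Set.Ioc (0:ℝ) 1, f (t + n) := by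
    refine (integral_tsum_of_summable_integral_norm (F := fun (n : ℤ) (t : ℝ) => f (t + (n:ℝ))) (μ := volume.restrict (Set.Ioc (0:ℝ) 1)) (fun n => ?_) ?_).symm
    · exact (hint.comp_add_right (n : ℝ)).restrict
    · refine Summable.congr h2.summable (fun n => ?_)
      exact hioc (fun x => ‖f x‖) n
  have hL : (∫ t in Set.Ioc (0:ℝ) 1, ∑' n : ℤ, f (t + n)) = S := by
    rw [show (fun t => ∑' n : ℤ, f (t + n)) = fun _ => S from funext fun t => (hpt t).tsum_eq]
    rw [setIntegral_const]
    simp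
  rw [← h1.tsum_eq]
  rw [show (fun n : ℤ => ∫ x in (0:ℝ)..(1:ℝ), f (x + n)) = fun n : ℤ =>
    ∫ x in Set.Ioc (0:ℝ) 1, f (x + n) from funext fun n => hioc f n]
  rw [← hswap, hL]


lemma abs_sinc_le_inv' (x : ℝ) (hx : x ≠ 0) : |_root_.sinc x| ≤ 1 / |x| := by
  refine (abs_sinc_le_inv x hx).trans ?_
  have h0 : (0:ℝ) < |x| := abs_pos.mpr hx
  rw [div_le_div_iff₀ (by positivity) h0]
  nlinarith [Real.pi_gt_three]

lemma integrable_sinc_mul (y : ℝ) : Integrable (fun t => _root_.sinc t * _root_.sinc (y - t)) := by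
  have hC : (0:ℝ) < 4 + (2*|y|+2)^2 := by positivity
  set C : ℝ := 4 + (2*|y|+2)^2 with hCdef
  have hmeas : AEStronglyMeasurable (fun t => _root_.sinc t * _root_.sinc (y - t)) volume :=
    ((_root_.measurable_sinc.comp measurable_id).mul
      (_root_.measurable_sinc.comp (measurable_const.sub measurable_id))).aestronglyMeasurable
  refine (integrable_inv_one_add_sq.const_mul C).mono' hmeas ?_
  filter_upwards with t
  have h1t : (0:ℝ) < 1 + t^2 := by positivity
  rw [norm_mul, Real.norm_eq_abs, Real.norm_eq_abs]
  rcases le_or_gt |t| (2*|y|+2) with h | h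
  · calc |_root_.sinc t| * |_root_.sinc (y - t)| ≤ 1 * 1 :=
          mul_le_mul (abs_sinc_le_one t) (abs_sinc_le_one _) (abs_nonneg _) zero_le_one
      _ ≤ C * (1 + t^2)⁻¹ := by
          rw [mul_one, le_mul_inv_iff₀ h1t, one_mul]
          nlinarith [abs_nonneg y, abs_nonneg t, sq_abs t]
  · have ht0 : t ≠ 0 := by
      intro h0; rw [h0] at h; simp at h; nlinarith [abs_nonneg y]
    have hyt : |y - t| ≥ |t| / 2 := by
      have := abs_sub_abs_le_abs_sub t y
      rw [abs_sub_comm t y] at this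
      nlinarith [abs_nonneg y]
    have hyt0 : y - t ≠ 0 := by
      intro h0
      rw [h0] at hyt
      simp at hyt
      nlinarith [abs_pos.mpr ht0, abs_nonneg y]
    calc |_root_.sinc t| * |_root_.sinc (y - t)| ≤ (1/|t|) * (1/|y - t|) :=
          mul_le_mul (abs_sinc_le_inv' t ht0) (abs_sinc_le_inv' _ hyt0) (abs_nonneg _)
            (by positivity)
      _ ≤ C * (1 + t^2)⁻¹ := by
          have h2 : (1/|t|) * (1/|y-t|) ≤ (1/|t|) * (2/|t|) := by
            refine mul_le_mul_of_nonneg_left ?_ (by positivity)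
            rw [div_le_div_iff₀ (abs_pos.mpr hyt0) (abs_pos.mpr ht0)]
            nlinarith [abs_pos.mpr ht0]
          refine h2.trans ?_
          rw [div_mul_div_comm, one_mul, div_le_iff₀ (by positivity), mul_comm C,
            inv_mul_eq_div, div_mul_eq_mul_div, le_div_iff₀ h1t]
          have hts : |t| * |t| = t^2 := by rw [← sq_abs]; ring
          have ht4 : t^2 ≥ 4 := by nlinarith [abs_nonneg y, sq_abs t]
          nlinarith [ht4]

lemma integral_sinc_mul_sinc (y : ℝ) : (∫ t : ℝ, _root_.sinc t * _root_.sinc (y - t)) = _root_.sinc y := by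
  refine integral_eq_of_hasSum_translates (integrable_sinc_mul y) (fun t => ?_)
  have h := hasSum_sinc_mul t (t - y)
  have h2 := ((Equiv.neg ℤ).hasSum_iff
    (f := fun n : ℤ => _root_.sinc (t - n) * _root_.sinc (t - y - n)) (a := _root_.sinc (t - y - t))).mpr h
  have heq : (fun n : ℤ => _root_.sinc (t + n) * _root_.sinc (y - (t + n)))
      = (fun n : ℤ => _root_.sinc (t - n) * _root_.sinc (t - y - n)) ∘ (Equiv.neg ℤ) := by
    funext n
    simp only [Function.comp_apply, Equiv.neg_apply]
    congr 1
    · congr 1; push_cast; ring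
    · rw [show (y - (t + n)) = -(t - y - ((-n : ℤ) : ℝ)) by push_cast; ring, _root_.sinc_neg]
  rw [heq]
  rw [show (t - y - t) = -y by ring, _root_.sinc_neg] at h2
  exact h2

/-- For `B > 0` and any `u, v ∈ ℝ`, the classical convolution of the
shifted _root_.sinc functions `_root_.sinc((B/π)(·−v))` and `_root_.sinc((B/π)(·−u))` equals
`(π/B) sinc((B/π)(x−(v+u)))`. -/
theorem sinc_conv_sinc (B : ℝ) (hB : 0 < B) (u v : ℝ) :
    ∀ x : ℝ,
      (∫ τ : ℝ, _root_.sinc ((B / Real.pi) * (τ - v)) * _root_.sinc ((B / Real.pi) * ((x - τ) - u)))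
        = (Real.pi / B) * _root_.sinc ((B / Real.pi) * (x - (v + u))) := by
  intro x
  set a : ℝ := B / Real.pi with ha
  have ha0 : 0 < a := div_pos hB Real.pi_pos
  set c : ℝ := a * (x - (v + u)) with hc
  have hstep : ∀ τ : ℝ, _root_.sinc (a * (τ - v)) * _root_.sinc (a * ((x - τ) - u))
      = _root_.sinc ((a * τ - a * v)) * _root_.sinc (c - (a * τ - a * v)) := by
    intro τ
    congr 1
    · congr 1; ring
    · congr 1; rw [hc]; ring
  simp_rw [hstep]
  rw [show (fun τ : ℝ => _root_.sinc (a * τ - a * v) * _root_.sinc (c - (a * τ - a * v)))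
      = fun τ : ℝ => (fun s => _root_.sinc (s - a * v) * _root_.sinc (c - (s - a * v))) (a * τ) from rfl]
  rw [MeasureTheory.Measure.integral_comp_mul_left (fun s => _root_.sinc (s - a * v) * _root_.sinc (c - (s - a * v))) a]
  rw [show (fun s : ℝ => _root_.sinc (s - a * v) * _root_.sinc (c - (s - a * v)))
      = fun s : ℝ => (fun r => _root_.sinc r * _root_.sinc (c - r)) (s - a * v) from rfl]
  rw [integral_sub_right_eq_self (fun r => _root_.sinc r * _root_.sinc (c - r)) (a * v)]
  rw [integral_sinc_mul_sinc c]
  rw [smul_eq_mul, abs_of_pos (inv_pos.mpr ha0)]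
  congr 1
  rw [ha]
  field_simp
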